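/- Let Γ be a signed graph of order n, let x = (x1,…,xn)ᵀ be an eigenvector of A(Γ) associated with the largest eigenvalue λ1(Γ), and let v_r v_s be a negative edge of Γ with x_r x_s ≥ 0 and with x_r and x_s not both zero. If Γ' is the signed graph obtained from Γ either by removing the edge v_r v_s or by reversing its sign to positive, then λ1(Γ') > λ1(Γ). -/

import Mathlib

structure SignedGraph (V : Type*) where
  G : SimpleGraph V
  sign : V → V → ℤ
  sign_symm : ∀ u v, sign u v = sign v u
  sign_mem : ∀ u v, G.Adj u v → sign u v = 1 ∨ sign u v = -1
  sign_not : ∀ u v, ¬ G.Adj u v → sign u v = 0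

namespace SignedGraph

variable {V : Type*}

/-- The adjacency matrix of a signed graph, over `ℝ`. -/
noncomputable def adjMatrix (Γ : SignedGraph V) : Matrix V V ℝ :=
  fun u v => (Γ.sign u v : ℝ)

/-- The largest eigenvalue `λ₁` of a signed graph. -/
noncomputable def lambda1 (Γ : SignedGraph V) [Fintype V] : ℝ :=
  letI := Classical.decEq V
  sSup (spectrum ℝ Γ.adjMatrix)

/-- The smallest eigenvalue `λₙ` of a signed graph. -/
noncomputable def lambdaMin (Γ : SignedGraph V) [Fintype V] : ℝ :=
  letI := Classical.decEq V
  sInf (spectrum ℝ Γ.adjMatrix)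

/-- The spectral radius `ρ = max {λ₁, -λₙ}` of a signed graph. -/
noncomputable def rho (Γ : SignedGraph V) [Fintype V] : ℝ :=
  max Γ.lambda1 (-Γ.lambdaMin)

/-- The sign (product of edge signs) of a walk. -/
def walkSign (Γ : SignedGraph V) {G' : SimpleGraph V} : ∀ {u v : V}, G'.Walk u v → ℤ
  | _, _, .nil => 1
  | _, _, .cons (u := a) (v := b) _ p => Γ.sign a b * walkSign Γ p

/-- A signed graph is balanced if every cycle is positive. -/
def Balanced (Γ : SignedGraph V) : Prop :=
  ∀ (u : V) (w : Γ.G.Walk u u), w.IsCycle → Γ.walkSign w = 1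

def Unbalanced (Γ : SignedGraph V) : Prop := ¬ Γ.Balanced

/-- `Γ` has a negative cycle of length `k`. -/
def HasNegCycleOfLength (Γ : SignedGraph V) (k : ℕ) : Prop :=
  ∃ (u : V) (w : Γ.G.Walk u u), w.IsCycle ∧ Γ.walkSign w = -1 ∧ w.length = k

/-- Switching equivalence: same underlying graph and signs related by a switching function. -/
def SwitchingEquivalent (Γ Γ' : SignedGraph V) : Prop :=
  Γ.G = Γ'.G ∧ ∃ s : V → ℤ, (∀ v, s v = 1 ∨ s v = -1) ∧
    ∀ u v, Γ'.sign u v = s u * Γ.sign u v * s v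

/-- Switching isomorphism. -/
def SwitchingIsomorphic {V' : Type*} (Γ : SignedGraph V) (Γ' : SignedGraph V') : Prop :=
  ∃ (e : V ≃ V') (s : V → ℤ), (∀ v, s v = 1 ∨ s v = -1) ∧
    (∀ u v, Γ'.G.Adj (e u) (e v) ↔ Γ.G.Adj u v) ∧
    (∀ u v, Γ'.sign (e u) (e v) = s u * Γ.sign u v * s v)

/-- Build a signed graph from a symmetric sign function with values in `{0, 1, -1}`. -/
def ofSign (s : V → V → ℤ) (hsymm : ∀ u v, s u v = s v u)
    (hloop : ∀ v, s v v = 0)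
    (hval : ∀ u v, s u v = 0 ∨ s u v = 1 ∨ s u v = -1) : SignedGraph V where
  G := { Adj := fun u v => s u v ≠ 0
         symm := ⟨fun u v h => by
           show s v u ≠ 0
           rw [hsymm v u]; exact h⟩
         loopless := ⟨fun v h => h (hloop v)⟩ }
  sign := s
  sign_symm := hsymm
  sign_mem := fun u v h => (hval u v).resolve_left h
  sign_not := fun u v h => not_not.mp h

/-- Build a signed graph on `Fin n` from a sign function on ordered pairs of naturals. -/
def ofMinMaxAux (n : ℕ) (aux : ℕ → ℕ → ℤ) (h0 : ∀ a, aux a a = 0)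
    (hval : ∀ a b, aux a b = 0 ∨ aux a b = 1 ∨ aux a b = -1) : SignedGraph (Fin n) :=
  ofSign (fun i j => aux (min i.val j.val) (max i.val j.val))
    (fun i j => by
      show aux (min i.val j.val) (max i.val j.val) = aux (min j.val i.val) (max j.val i.val)
      rw [min_comm, max_comm])
    (fun i => by
      show aux (min i.val i.val) (max i.val i.val) = 0
      rw [min_self, max_self, h0])
    (fun i j => hval _ _)

def gammaNAux : ℕ → ℕ → ℤ := fun a b =>
  if a = b then 0
  else if a = 0 ∧ b = 1 then -1
  else if a = 0 ∧ b = 2 then 1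
  else if a = 1 ∧ b = 3 then 1
  else if 2 ≤ a ∧ a < b ∧ ¬(a = 2 ∧ b = 3) then 1
  else 0

/-- The signed graph `Γₙ`: a copy of `K_{n-2}` (on `{2, …, n-1}`) with the edge `{2,3}`
removed, together with two new vertices `0, 1` and edges `{0,1}` (negative),
`{0,2}` and `{1,3}` (positive); all other edges positive. -/
def GammaN (n : ℕ) : SignedGraph (Fin n) :=
  ofMinMaxAux n gammaNAux (fun a => by simp [gammaNAux])
    (fun a b => by unfold gammaNAux; split_ifs <;> simp)

def gammaNTauAux (τ : ℕ) : ℕ → ℕ → ℤ := fun a b =>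
  if a = b then 0
  else if a = 0 ∧ b = 1 then -1
  else if a = 0 ∧ b = 3 then 1
  else if a = 0 ∧ 4 ≤ b ∧ b ≤ τ + 3 then 1
  else if a = 1 ∧ b = 2 then 1
  else if a = 2 ∧ τ + 4 ≤ b then 1
  else if a = 3 ∧ 4 ≤ b then 1
  else if 4 ≤ a ∧ a < b then 1
  else 0

/-- The signed graph `Γ_{n,τ}`: here `v₁ = 0`, `v₂ = 1`, `v₃ = 2`, `v₅ = 3`,
`X = {4, …, τ+3}`, `Y = {τ+4, …, n-1}` (with `v₄ = τ+4 ∈ Y`); the edge `{0,1}` is the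
unique negative edge. -/
def GammaNTau (n τ : ℕ) : SignedGraph (Fin n) :=
  ofMinMaxAux n (gammaNTauAux τ) (fun a => by simp [gammaNTauAux])
    (fun a b => by unfold gammaNTauAux; split_ifs <;> simp)

/-- The negation `-Γ` of a signed graph. -/
def neg (Γ : SignedGraph V) : SignedGraph V where
  G := Γ.G
  sign := fun u v => - Γ.sign u v
  sign_symm := fun u v => by
    show -Γ.sign u v = -Γ.sign v u
    rw [Γ.sign_symm]
  sign_mem := fun u v h => by
    show -Γ.sign u v = 1 ∨ -Γ.sign u v = -1
    rcases Γ.sign_mem u v h with h' | h' <;> simp [h']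
  sign_not := fun u v h => by
    show -Γ.sign u v = 0
    simp [Γ.sign_not u v h]

/-- The induced signed subgraph on a set of vertices. -/
def induce (Γ : SignedGraph V) (S : Set V) : SignedGraph S where
  G := { Adj := fun u v => Γ.G.Adj u v
         symm := ⟨fun u v h => Γ.G.adj_symm h⟩
         loopless := ⟨fun u h => Γ.G.loopless.irrefl u h⟩ }
  sign := fun u v => Γ.sign u v
  sign_symm := fun u v => Γ.sign_symm u v
  sign_mem := fun u v h => Γ.sign_mem u v h
  sign_not := fun u v h => Γ.sign_not u v h

/-- `S` is a balanced clique of `Γ`: it induces a complete subgraph which is balanced. -/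
def IsBalancedClique [DecidableEq V] (Γ : SignedGraph V) (S : Finset V) : Prop :=
  (∀ u ∈ S, ∀ v ∈ S, u ≠ v → Γ.G.Adj u v) ∧ (Γ.induce (S : Set V)).Balanced

end SignedGraph

/-! Let `D = A(Γ') - A(Γ)`, `λ = λ₁(Γ)` and `μ = λ₁(Γ')`. `D` is supported on the entries `rs`
and `sr`, where it equals `c ∈ {1, 2}`, so `xᵀ D x = 2 c x_r x_s ≥ 0` and `D x ≠ 0`.
Since `μ I - A(Γ')` is positive semidefinite, its quadratic form `(μ - λ) ‖x‖² - xᵀ D x` at `x`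
is nonnegative, whence `μ ≥ λ`. If `μ = λ`, that form vanishes at `x`, so `x` lies in the kernel
of `λ I - A(Γ')`: then `A(Γ') x = λ x = A(Γ) x`, i.e. `D x = 0`. -/

open Matrix

namespace Matrix

variable {n R : Type*} [Fintype n] [DecidableEq n] [CommRing R]

theorem dotProduct_single_add_single_mulVec (i j : n) (c : R) (x : n → R) :
    x ⬝ᵥ (single i j c + single j i c) *ᵥ x = 2 * c * (x i * x j) := by
  rw [add_mulVec, single_mulVec_eq, single_mulVec_eq, dotProduct_add, dotProduct_smul,
    dotProduct_smul, dotProduct_single, dotProduct_single, smul_eq_mul, smul_eq_mul]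
  ring

theorem single_add_single_mulVec_ne_zero [NoZeroDivisors R] {i j : n} (hij : i ≠ j) {c : R}
    (hc : c ≠ 0) {x : n → R} (hx : x i ≠ 0 ∨ x j ≠ 0) :
    (single i j c + single j i c) *ᵥ x ≠ 0 := by
  intro h
  rw [add_mulVec, single_mulVec, single_mulVec] at h
  have hi := congrFun h i
  have hj := congrFun h j
  simp [hij, hij.symm, hc] at hi hj
  tauto

theorem IsHermitian.posSemidef_algebraMap_sub {M : Matrix n n ℝ} (hM : M.IsHermitian) {μ : ℝ}
    (hμ : ∀ ν ∈ spectrum ℝ M, ν ≤ μ) : (algebraMap ℝ (Matrix n n ℝ) μ - M).PosSemidef := by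
  refine posSemidef_iff_isHermitian_and_spectrum_nonneg.mpr
    ⟨((IsSelfAdjoint.all μ).algebraMap _).sub hM, ?_⟩
  rw [← spectrum.singleton_sub_eq]
  rintro _ ⟨_, rfl, ν, hν, rfl⟩
  exact sub_nonneg.mpr (hμ ν hν)

theorem lt_sSup_spectrum_of_mulVec_eq_smul {A A' : Matrix n n ℝ} (hA' : A'.IsHermitian)
    {x : n → ℝ} {l : ℝ} (hx : A *ᵥ x = l • x) (hD : 0 ≤ x ⬝ᵥ (A' - A) *ᵥ x)
    (hDx : (A' - A) *ᵥ x ≠ 0) :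
    l < sSup (spectrum ℝ A') := by
  set μ := sSup (spectrum ℝ A')
  set P := algebraMap ℝ (Matrix n n ℝ) μ - A'
  have hP : P.PosSemidef := hA'.posSemidef_algebraMap_sub fun ν hν ↦
    le_csSup A'.finite_spectrum.bddAbove hν
  have hPx : P *ᵥ x = (μ - l) • x - (A' - A) *ᵥ x := by
    simp only [P, sub_mulVec, Algebra.algebraMap_eq_smul_one, smul_mulVec, one_mulVec, hx]
    module
  have hxx : 0 < x ⬝ᵥ x := by
    refine lt_of_le_of_ne (dotProduct_self_star_nonneg x) (Ne.symm ?_)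
    rw [Ne, dotProduct_self_eq_zero]
    rintro rfl
    exact hDx (mulVec_zero _)
  have hquad : x ⬝ᵥ P *ᵥ x = (μ - l) * (x ⬝ᵥ x) - x ⬝ᵥ (A' - A) *ᵥ x := by
    rw [hPx, dotProduct_sub, dotProduct_smul, smul_eq_mul]
  have hPnonneg : 0 ≤ x ⬝ᵥ P *ᵥ x := by simpa using hP.dotProduct_mulVec_nonneg x
  by_contra! hle
  have hμl : μ = l := by nlinarith
  have hPzero : P *ᵥ x = 0 := by
    rw [← hP.dotProduct_mulVec_zero_iff, star_trivial]
    rw [hμl, sub_self, zero_mul, zero_sub] at hquad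
    linarith
  rw [hμl, sub_self, zero_smul, zero_sub, hPzero] at hPx
  exact hDx (neg_eq_zero.mp hPx.symm)

end Matrix

namespace SignedGraph

variable {V : Type*}

theorem sign_self (Γ : SignedGraph V) (v : V) : Γ.sign v v = 0 :=
  Γ.sign_not v v Γ.G.irrefl

theorem adjMatrix_isHermitian (Γ : SignedGraph V) : Γ.adjMatrix.IsHermitian := by
  ext u v
  simp [adjMatrix, Γ.sign_symm u v]

theorem adjMatrix_sub_eq_single [DecidableEq V] {Γ Γ' : SignedGraph V} {r s : V} (hrs : r ≠ s)
    (hrest : ∀ u v : V, ¬ ((u = r ∧ v = s) ∨ (u = s ∧ v = r)) → Γ'.sign u v = Γ.sign u v) :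
    Γ'.adjMatrix - Γ.adjMatrix =
      single r s ((Γ'.sign r s - Γ.sign r s : ℤ) : ℝ) +
        single s r ((Γ'.sign r s - Γ.sign r s : ℤ) : ℝ) := by
  ext u v
  by_cases h : (u = r ∧ v = s) ∨ (u = s ∧ v = r)
  · rcases h with ⟨rfl, rfl⟩ | ⟨rfl, rfl⟩
    · simp [adjMatrix, hrs]
    · simp [adjMatrix, hrs, Γ.sign_symm u v, Γ'.sign_symm u v]
  · simp only [Matrix.sub_apply, Matrix.add_apply, adjMatrix, hrest u v h, sub_self, single_apply]
    grind

end SignedGraph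

open SignedGraph in
theorem lambda1_lt_of_remove_or_flip_negative_edge_general {V : Type*} [Fintype V]
    (Γ Γ' : SignedGraph V) (r s : V) (hneg : Γ.sign r s = -1)
    (x : V → ℝ) (heig : Γ.adjMatrix.mulVec x = Γ.lambda1 • x)
    (hprod : 0 ≤ x r * x s) (hnz : x r ≠ 0 ∨ x s ≠ 0)
    (hnew : Γ'.sign r s = 0 ∨ Γ'.sign r s = 1)
    (hrest : ∀ u v : V, ¬ ((u = r ∧ v = s) ∨ (u = s ∧ v = r)) → Γ'.sign u v = Γ.sign u v) :
    Γ.lambda1 < Γ'.lambda1 := by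
  classical
  have hrs : r ≠ s := by
    rintro rfl
    simp [sign_self] at hneg
  have hc : (0 : ℝ) < ((Γ'.sign r s - Γ.sign r s : ℤ) : ℝ) := by
    rcases hnew with h | h <;> simp [h, hneg]
  have hD := adjMatrix_sub_eq_single hrs hrest
  refine lt_sSup_spectrum_of_mulVec_eq_smul Γ'.adjMatrix_isHermitian heig ?_ ?_
  · rw [hD, dotProduct_single_add_single_mulVec]
    exact mul_nonneg (by linarith) hprod
  · rw [hD]
    exact single_add_single_mulVec_ne_zero hrs hc.ne' hnz

open SignedGraph in
/-- Removing a negative edge `r s` with `x_r x_s ≥ 0` and `x_r, x_s` not both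
zero (where `x` is an eigenvector for `λ₁`), or reversing its sign to positive, strictly
increases the largest eigenvalue. -/
theorem lambda1_lt_of_remove_or_flip_negative_edge {V : Type*} [Fintype V]
    (Γ Γ' : SignedGraph V) (r s : V) (hneg : Γ.sign r s = -1)
    (x : V → ℝ) (hx0 : x ≠ 0) (heig : Γ.adjMatrix.mulVec x = Γ.lambda1 • x)
    (hprod : 0 ≤ x r * x s) (hnz : x r ≠ 0 ∨ x s ≠ 0)
    (hnew : Γ'.sign r s = 0 ∨ Γ'.sign r s = 1)
    (hrest : ∀ u v : V, ¬ ((u = r ∧ v = s) ∨ (u = s ∧ v = r)) → Γ'.sign u v = Γ.sign u v) :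
    Γ.lambda1 < Γ'.lambda1 :=
  lambda1_lt_of_remove_or_flip_negative_edge_general Γ Γ' r s hneg x heig hprod hnz hnew hrest
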